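/- Under the hypotheses of the factorization theorem (zero curvature G_t - F_x + [G,F] = 0, with G, G_t, F continuous and F_x existing), the fundamental solution W of ∂W/∂x = G·W with W(0,t) = I satisfies the identity W_t(x,t) - F(x,t)·W(x,t) = -W(x,t)·F(0,t) for all (x,t) in the semi-strip. -/

import Mathlib

/-!
Differentiating `∂ₓW = G W` formally in `t` shows that `W_t(·, t)` should solve `V' = G V + G_t W`,
`V(0) = 0`, and by the zero curvature equation `H = F W - W F(0, t)` solves exactly this problem.
The formal computation is justified without differentiating `W_t`: the remainder
`W(·, s) - W(·, t) - (s - t) H` solves a linear equation whose forcing term is `o(|s - t|)`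
uniformly in `x` (by uniform continuity of `G_t` on compacts), so Grönwall's inequality makes the
remainder itself `o(|s - t|)`, i.e. `∂ₜW = H`.
-/

open Matrix Set Filter Topology

attribute [local instance] Matrix.normedAddCommGroup Matrix.normedSpace

lemma gronwallBound_δ0 (K ε x : ℝ) :
    gronwallBound 0 K ε x = ε * gronwallBound 0 K 1 x := by
  unfold gronwallBound; split_ifs <;> ring

section LinearODE

variable {E : Type*} [NormedAddCommGroup E] [NormedSpace ℝ E]

theorem norm_sub_sub_smul_le_gronwallBound {A₀ A₁ A' : ℝ → E →ₗ[ℝ] E} {U₀ U₁ V : ℝ → E}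
    {a b h K η : ℝ} (hab : a ≤ b)
    (hU₀ : ∀ y ∈ Icc a b, HasDerivWithinAt U₀ (A₀ y (U₀ y)) (Icc a b) y)
    (hU₁ : ∀ y ∈ Icc a b, HasDerivWithinAt U₁ (A₁ y (U₁ y)) (Icc a b) y)
    (hV : ∀ y ∈ Icc a b, HasDerivWithinAt V (A₀ y (V y) + A' y (U₀ y)) (Icc a b) y)
    (ha : U₁ a - U₀ a - h • V a = 0) (hA₁ : ∀ y ∈ Icc a b, ∀ v, ‖A₁ y v‖ ≤ K * ‖v‖)
    (hη : ∀ y ∈ Icc a b, ‖(A₁ y - A₀ y) (h • V y) + (A₁ y - A₀ y - h • A' y) (U₀ y)‖ ≤ η) :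
    ‖U₁ b - U₀ b - h • V b‖ ≤ gronwallBound 0 K η (b - a) := by
  have hE : ∀ y ∈ Icc a b, HasDerivWithinAt (fun y => U₁ y - U₀ y - h • V y)
      (A₁ y (U₁ y - U₀ y - h • V y) +
        ((A₁ y - A₀ y) (h • V y) + (A₁ y - A₀ y - h • A' y) (U₀ y))) (Icc a b) y :=
    fun y hy => ((hU₁ y hy).sub (hU₀ y hy)).sub ((hV y hy).const_smul h) |>.congr_deriv (by
      simp only [map_sub, map_smul, LinearMap.sub_apply, LinearMap.smul_apply, smul_add,
        smul_sub]
      abel)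
  refine norm_le_gronwallBound_of_norm_deriv_right_le (fun y hy => (hE y hy).continuousWithinAt)
    (fun y hy => (hE y ⟨hy.1, hy.2.le⟩).mono_of_mem_nhdsWithin (Icc_mem_nhdsGE_of_mem hy))
    (by rw [ha, norm_zero]) (fun y hy => ?_) b ⟨hab, le_rfl⟩
  have hy' : y ∈ Icc a b := ⟨hy.1, hy.2.le⟩
  exact (norm_add_le _ _).trans (add_le_add (hA₁ y hy' _) (hη y hy'))

theorem hasDerivWithinAt_param_of_linear_ode {A : ℝ → ℝ → E →ₗ[ℝ] E} {A' : ℝ → E →ₗ[ℝ] E}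
    {U : ℝ → ℝ → E} {V : ℝ → E} {a b t K : ℝ} {T : Set ℝ} (hab : a ≤ b) (ht : t ∈ T)
    (hU : ∀ s ∈ T, ∀ y ∈ Icc a b, HasDerivWithinAt (U · s) (A y s (U y s)) (Icc a b) y)
    (hUa : ∀ s ∈ T, U a s = U a t)
    (hV : ∀ y ∈ Icc a b, HasDerivWithinAt V (A y t (V y) + A' y (U y t)) (Icc a b) y)
    (hVa : V a = 0) (hA : ∀ s ∈ T, ∀ y ∈ Icc a b, ∀ v, ‖A y s v‖ ≤ K * ‖v‖)
    (hA' : ∀ y ∈ Icc a b, ∀ v, ‖A' y v‖ ≤ K * ‖v‖)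
    (hA_deriv : ∀ ε > 0, ∀ᶠ s in 𝓝[T] t, ∀ y ∈ Icc a b, ∀ v,
      ‖(A y s - A y t - (s - t) • A' y) v‖ ≤ ε * |s - t| * ‖v‖) :
    HasDerivWithinAt (U b) (V b) T t := by
  wlog hK : 0 ≤ K generalizing K
  · refine this (K := max K 0) (fun s hs y hy v => (hA s hs y hy v).trans ?_)
      (fun y hy v => (hA' y hy v).trans ?_) (le_max_right K 0) <;> gcongr <;> exact le_max_left K 0
  obtain ⟨CU, hCU⟩ := isCompact_Icc.exists_bound_of_continuousOn
    fun y hy => (hU t ht y hy).continuousWithinAt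
  obtain ⟨CV, hCV⟩ := isCompact_Icc.exists_bound_of_continuousOn
    fun y hy => (hV y hy).continuousWithinAt
  have hmem : a ∈ Icc a b := ⟨le_rfl, hab⟩
  have hCU0 : 0 ≤ CU := (norm_nonneg _).trans (hCU a hmem)
  have hCV0 : 0 ≤ CV := (norm_nonneg _).trans (hCV a hmem)
  set C := ((1 + K) * CV + CU) * gronwallBound 0 K 1 (b - a)
  have hC : 0 ≤ C := mul_nonneg (by positivity) <| (gronwallBound_x0 0 K 1).symm.le.trans
    (gronwallBound_mono le_rfl zero_le_one hK (sub_nonneg.2 hab))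
  have hA_lip : ∀ᶠ s in 𝓝[T] t, ∀ y ∈ Icc a b, ∀ v,
      ‖(A y s - A y t) v‖ ≤ (1 + K) * |s - t| * ‖v‖ := by
    filter_upwards [hA_deriv 1 one_pos] with s hs y hy v
    calc ‖(A y s - A y t) v‖ ≤ ‖(A y s - A y t - (s - t) • A' y) v‖ + ‖(s - t) • A' y v‖ := by
          simpa using norm_le_norm_sub_add ((A y s - A y t) v) ((s - t) • A' y v)
      _ ≤ 1 * |s - t| * ‖v‖ + |s - t| * (K * ‖v‖) := by
          rw [norm_smul, Real.norm_eq_abs]; gcongr; exacts [hs y hy v, hA' y hy v]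
      _ = (1 + K) * |s - t| * ‖v‖ := by ring
  have hremainder : ∀ ε > 0, ∀ᶠ s in 𝓝[T] t, ‖U b s - U b t - (s - t) • V b‖ ≤ ε * C * |s - t| := by
    intro ε hε
    have hclose : ∀ᶠ s in 𝓝[T] t, |s - t| ≤ ε :=
      nhdsWithin_le_nhds (Metric.closedBall_mem_nhds t hε)
    filter_upwards [hA_deriv ε hε, hA_lip, hclose, self_mem_nhdsWithin] with s hs hlip hst hsT
    have hforce : ∀ y ∈ Icc a b, ‖(A y s - A y t) ((s - t) • V y) +
        (A y s - A y t - (s - t) • A' y) (U y t)‖ ≤ ε * |s - t| * ((1 + K) * CV + CU) := by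
      intro y hy
      calc _ ≤ (1 + K) * |s - t| * ‖(s - t) • V y‖ + ε * |s - t| * ‖U y t‖ :=
            (norm_add_le _ _).trans (add_le_add (hlip y hy _) (hs y hy _))
        _ ≤ (1 + K) * |s - t| * (ε * CV) + ε * |s - t| * CU := by
            rw [norm_smul, Real.norm_eq_abs]
            gcongr
            exacts [hCV y hy, hCU y hy]
        _ = ε * |s - t| * ((1 + K) * CV + CU) := by ring
    have := norm_sub_sub_smul_le_gronwallBound hab (hU t ht) (hU s hsT) hV
      (by rw [hUa s hsT, sub_self, hVa, smul_zero, sub_zero]) (hA s hsT) hforce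
    rw [gronwallBound_δ0] at this
    linarith
  rw [hasDerivWithinAt_iff_isLittleO, Asymptotics.isLittleO_iff]
  intro c hc
  filter_upwards [hremainder (c / (C + 1)) (by positivity)] with s hs
  refine hs.trans ?_
  rw [Real.norm_eq_abs]
  gcongr
  rw [div_mul_eq_mul_div, div_le_iff₀ (by positivity)]
  nlinarith

end LinearODE

theorem eventually_forall_norm_sub_sub_smul_le {X E : Type*} [PseudoMetricSpace X]
    [NormedAddCommGroup E] [NormedSpace ℝ E] {f f' : X → ℝ → E} {S : Set X} {T : Set ℝ}
    (hS : IsCompact S) (hT : IsCompact T) (hTc : Convex ℝ T) {t : ℝ} (ht : t ∈ T)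
    (hf : ∀ y ∈ S, ∀ s ∈ T, HasDerivWithinAt (f y) (f' y s) T s)
    (hf' : ContinuousOn (fun p : X × ℝ => f' p.1 p.2) (S ×ˢ T)) {ε : ℝ} (hε : 0 < ε) :
    ∀ᶠ s in 𝓝[T] t, ∀ y ∈ S, ‖f y s - f y t - (s - t) • f' y t‖ ≤ ε * |s - t| := by
  obtain ⟨δ, hδ, hf'δ⟩ := Metric.uniformContinuousOn_iff.1
    ((hS.prod hT).uniformContinuousOn_of_continuous hf') ε hε
  filter_upwards [inter_mem_nhdsWithin T (Metric.ball_mem_nhds t hδ)] with s hs y hy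
  have hconv : Convex ℝ (T ∩ Metric.ball t δ) := hTc.inter (convex_ball t δ)
  have hderiv : ∀ σ ∈ T ∩ Metric.ball t δ, HasDerivWithinAt (fun σ => f y σ - σ • f' y t)
      (f' y σ - f' y t) (T ∩ Metric.ball t δ) σ := fun σ hσ =>
    ((hf y hy σ hσ.1).sub ((hasDerivWithinAt_id σ T).smul_const (f' y t))).mono
      inter_subset_left |>.congr_deriv (by simp)
  have hbound : ∀ σ ∈ T ∩ Metric.ball t δ, ‖f' y σ - f' y t‖ ≤ ε := fun σ hσ => by
    rw [← dist_eq_norm]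
    refine (hf'δ (y, σ) ⟨hy, hσ.1⟩ (y, t) ⟨hy, ht⟩ ?_).le
    simpa [Prod.dist_eq] using hσ.2
  have := hconv.norm_image_sub_le_of_norm_hasDerivWithin_le hderiv hbound
    ⟨ht, Metric.mem_ball_self hδ⟩ hs
  rw [Real.norm_eq_abs] at this
  convert this using 2
  rw [sub_smul]; abel

namespace Matrix

variable {n 𝕜 : Type*} [Fintype n] [RCLike 𝕜]

theorem norm_mul_le_card_mul {l m α : Type*} [Fintype l] [Fintype m] [NormedRing α]
    (A : Matrix l m α) (B : Matrix m n α) : ‖A * B‖ ≤ Fintype.card m * ‖A‖ * ‖B‖ := by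
  refine (norm_le_iff (by positivity)).2 fun i j => ?_
  calc ‖(A * B) i j‖ ≤ ∑ k, ‖A i k * B k j‖ := norm_sum_le _ _
    _ ≤ ∑ _k : m, ‖A‖ * ‖B‖ := Finset.sum_le_sum fun k _ =>
        (norm_mul_le _ _).trans (mul_le_mul (norm_entry_le_entrywise_sup_norm A)
          (norm_entry_le_entrywise_sup_norm B) (norm_nonneg _) (norm_nonneg _))
    _ = Fintype.card m * ‖A‖ * ‖B‖ := by simp [mul_assoc]

theorem _root_.HasDerivAt.matrix_mul {f g : ℝ → Matrix n n 𝕜} {f' g' : Matrix n n 𝕜} {x : ℝ}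
    (hf : HasDerivAt f f' x) (hg : HasDerivAt g g' x) :
    HasDerivAt (fun y => f y * g y) (f' * g x + f x * g') x := by
  have := (LinearMap.mul ℝ (Matrix n n 𝕜)).toContinuousBilinearMap.hasDerivWithinAt_of_bilinear
    (s := univ) hf.hasDerivWithinAt hg.hasDerivWithinAt
  rwa [hasDerivWithinAt_univ, add_comm] at this

theorem _root_.HasDerivAt.mul_sub_mul_of_zero_curvature {F W : ℝ → Matrix n n 𝕜}
    {G Gt Fx C : Matrix n n 𝕜} {y : ℝ} (hF : HasDerivAt F Fx y) (hW : HasDerivAt W (G * W y) y)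
    (hzc : Gt - Fx + (G * F y - F y * G) = 0) :
    HasDerivAt (fun y => F y * W y - W y * C) (G * (F y * W y - W y * C) + Gt * W y) y := by
  refine (hF.matrix_mul hW).sub (hW.matrix_mul (hasDerivAt_const y C)) |>.congr_deriv ?_
  rw [(sub_eq_zero.1 (by rw [← hzc]; abel) : Gt + (G * F y - F y * G) = Fx).symm]
  noncomm_ring

theorem hasDerivWithinAt_param_of_ode {G Gt W : ℝ → ℝ → Matrix n n 𝕜} {V : ℝ → Matrix n n 𝕜}
    {a b t : ℝ} {T : Set ℝ} (hab : a ≤ b) (hT : IsCompact T) (hTc : Convex ℝ T) (ht : t ∈ T)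
    (hG : ContinuousOn (fun p : ℝ × ℝ => G p.1 p.2) (Icc a b ×ˢ T))
    (hGt : ContinuousOn (fun p : ℝ × ℝ => Gt p.1 p.2) (Icc a b ×ˢ T))
    (hG_deriv : ∀ y ∈ Icc a b, ∀ s ∈ T, HasDerivWithinAt (G y) (Gt y s) T s)
    (hW : ∀ s ∈ T, ∀ y ∈ Icc a b, HasDerivWithinAt (W · s) (G y s * W y s) (Icc a b) y)
    (hWa : ∀ s ∈ T, W a s = W a t)
    (hV : ∀ y ∈ Icc a b, HasDerivWithinAt V (G y t * V y + Gt y t * W y t) (Icc a b) y)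
    (hVa : V a = 0) :
    HasDerivWithinAt (W b) (V b) T t := by
  obtain ⟨CG, hCG⟩ := (isCompact_Icc.prod hT).exists_bound_of_continuousOn hG
  obtain ⟨CGt, hCGt⟩ := (isCompact_Icc.prod hT).exists_bound_of_continuousOn hGt
  set c : ℝ := (Fintype.card n : ℝ)
  refine hasDerivWithinAt_param_of_linear_ode (A := fun y s => LinearMap.mul ℝ _ (G y s))
    (A' := fun y => LinearMap.mul ℝ _ (Gt y t)) (K := c * max CG CGt)
    hab ht hW hWa hV hVa (fun s hs y hy v => ?_) (fun y hy v => ?_) (fun ε hε => ?_)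
  · refine (norm_mul_le_card_mul _ _).trans ?_
    gcongr
    exact (hCG (y, s) ⟨hy, hs⟩).trans (le_max_left _ _)
  · refine (norm_mul_le_card_mul _ _).trans ?_
    gcongr
    exact (hCGt (y, t) ⟨hy, ht⟩).trans (le_max_right _ _)
  · filter_upwards [eventually_forall_norm_sub_sub_smul_le isCompact_Icc hT hTc ht hG_deriv hGt
      (ε := ε / (c + 1)) (by positivity)] with s hs y hy v
    rw [← map_sub, ← map_smul, ← map_sub]
    refine (norm_mul_le_card_mul _ _).trans ?_
    calc c * ‖G y s - G y t - (s - t) • Gt y t‖ * ‖v‖ ≤ c * (ε / (c + 1) * |s - t|) * ‖v‖ := by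
          gcongr; exact hs y hy
      _ = c * (ε / (c + 1)) * |s - t| * ‖v‖ := by ring
      _ ≤ ε * |s - t| * ‖v‖ := by
          gcongr
          rw [mul_div_assoc', div_le_iff₀ (by positivity)]
          linarith

end Matrix

theorem Wt_identity_general (m : ℕ) (a : ℝ)
    (G F Gt Fx W Wt : ℝ → ℝ → Matrix (Fin m) (Fin m) ℂ)
    (D : Set (ℝ × ℝ)) (hD : D = Set.Ici (0:ℝ) ×ˢ Set.Ico (0:ℝ) a)
    (hGc : ContinuousOn (fun p : ℝ × ℝ => G p.1 p.2) D)
    (hGtc : ContinuousOn (fun p : ℝ × ℝ => Gt p.1 p.2) D)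
    (hGt : ∀ x t, (x, t) ∈ D → HasDerivAt (fun s => G x s) (Gt x t) t)
    (hFx : ∀ x t, (x, t) ∈ D → HasDerivAt (fun y => F y t) (Fx x t) x)
    (hzc : ∀ x t, (x, t) ∈ D →
      Gt x t - Fx x t + (G x t * F x t - F x t * G x t) = 0)
    (hW : ∀ x t, (x, t) ∈ D → HasDerivAt (fun y => W y t) (G x t * W x t) x)
    (hW0 : ∀ t, 0 ≤ t → t < a → W 0 t = 1)
    -- Wt is the t-derivative of W (which exists by smooth parameter dependence)
    (hWt : ∀ x t, (x, t) ∈ D → HasDerivAt (fun s => W x s) (Wt x t) t) :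
    ∀ x t, (x, t) ∈ D → Wt x t - F x t * W x t = -(W x t * F 0 t) := by
  subst hD
  rintro x t ⟨hx, ht, hta⟩
  obtain ⟨b, htb, hba⟩ := exists_between hta
  have htT : t ∈ Icc 0 b := ⟨ht, htb.le⟩
  have hsub : Icc 0 x ×ˢ Icc 0 b ⊆ Ici 0 ×ˢ Ico 0 a :=
    fun p hp => ⟨hp.1.1, hp.2.1, hp.2.2.trans_lt hba⟩
  have hWx : HasDerivWithinAt (W x) (F x t * W x t - W x t * F 0 t) (Icc 0 b) t :=
    hasDerivWithinAt_param_of_ode (V := fun y => F y t * W y t - W y t * F 0 t) hx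
      isCompact_Icc (convex_Icc 0 b) htT (hGc.mono hsub) (hGtc.mono hsub)
      (fun y hy s hs => (hGt y s (hsub ⟨hy, hs⟩)).hasDerivWithinAt)
      (fun s hs y hy => (hW y s (hsub ⟨hy, hs⟩)).hasDerivWithinAt)
      (fun s hs => by rw [hW0 s hs.1 (hs.2.trans_lt hba), hW0 t ht hta])
      (fun y hy => ((hFx y t (hsub ⟨hy, htT⟩)).mul_sub_mul_of_zero_curvature
        (hW y t (hsub ⟨hy, htT⟩)) (hzc y t (hsub ⟨hy, htT⟩))).hasDerivWithinAt)
      (by simp only [hW0 t ht hta, mul_one, one_mul, sub_self])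
  rw [(uniqueDiffOn_Icc (ht.trans_lt htb) t htT).eq_deriv _
    (hWt x t ⟨hx, ht, hta⟩).hasDerivWithinAt hWx]
  abel

/-- Equation (1.10): under the zero curvature hypotheses, the fundamental solution `W`
of `∂W/∂x = G W`, `W(0,t) = I`, satisfies
`W_t(x,t) - F(x,t) W(x,t) = - W(x,t) F(0,t)` on the semi-strip. -/
theorem Wt_identity (m : ℕ) (a : ℝ) (ha : 0 < a)
    (G F Gt Fx W Wt : ℝ → ℝ → Matrix (Fin m) (Fin m) ℂ)
    (D : Set (ℝ × ℝ)) (hD : D = Set.Ici (0:ℝ) ×ˢ Set.Ico (0:ℝ) a)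
    (hGc : ContinuousOn (fun p : ℝ × ℝ => G p.1 p.2) D)
    (hGtc : ContinuousOn (fun p : ℝ × ℝ => Gt p.1 p.2) D)
    (hFc : ContinuousOn (fun p : ℝ × ℝ => F p.1 p.2) D)
    (hGt : ∀ x t, (x, t) ∈ D → HasDerivAt (fun s => G x s) (Gt x t) t)
    (hFx : ∀ x t, (x, t) ∈ D → HasDerivAt (fun y => F y t) (Fx x t) x)
    (hzc : ∀ x t, (x, t) ∈ D →
      Gt x t - Fx x t + (G x t * F x t - F x t * G x t) = 0)
    (hW : ∀ x t, (x, t) ∈ D → HasDerivAt (fun y => W y t) (G x t * W x t) x)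
    (hW0 : ∀ t, 0 ≤ t → t < a → W 0 t = 1)
    -- Wt is the t-derivative of W (which exists by smooth parameter dependence)
    (hWt : ∀ x t, (x, t) ∈ D → HasDerivAt (fun s => W x s) (Wt x t) t) :
    ∀ x t, (x, t) ∈ D → Wt x t - F x t * W x t = -(W x t * F 0 t) :=
  Wt_identity_general m a G F Gt Fx W Wt D hD hGc hGtc hGt hFx hzc hW hW0 hWt
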